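/- Let L > 0 and let g : ℝ → ℝ be an L-Lipschitz function. Then the map f : ℂ → ℂ defined by f(z) = Re z + i L² Im z + i g(Re z) is delta-monotone for some δ > 0 depending only on L. In particular, every Lipschitz graph {u + i g(u) : u ∈ ℝ} is the image of ℝ under a nonconstant delta-monotone map ℂ → ℂ. -/

import Mathlib

/-!
Write `z - ζ = a + ib` and `c = g(Re z) - g(Re ζ)`, so that `f z - f ζ = a + i(L²b + c)` with
`|c| ≤ L|a|`, and put `S = a² + L²b²`. Then `Re ((f z - f ζ)/(z - ζ)) · |z - ζ|² = a² + L²b² + bc`,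
which is at least `S/2` because `|bc| ≤ L|a||b| ≤ S/2`, while `|f z - f ζ|² ≤ (1 + 2L²) S` and
`min(L,1)² |z - ζ|² ≤ S`. Hence `δ = min(L,1) / (2√(1 + 2L²))` works for every `L`-Lipschitz `g`.
-/

def DeltaMonotone (δ : ℝ) (f : ℂ → ℂ) : Prop :=
  ∀ z ζ : ℂ, z ≠ ζ → δ * (‖f z - f ζ‖ / ‖z - ζ‖) ≤ ((f z - f ζ) / (z - ζ)).re

theorem Complex.mul_div_norm_le_div_re_iff {v w : ℂ} (hw : w ≠ 0) (δ : ℝ) :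
    δ * (‖v‖ / ‖w‖) ≤ (v / w).re ↔ δ * ‖v‖ * ‖w‖ ≤ v.re * w.re + v.im * w.im := by
  have hw' : 0 < ‖w‖ := norm_pos_iff.2 hw
  rw [Complex.div_re, ← add_div, Complex.normSq_eq_norm_sq,
    show δ * (‖v‖ / ‖w‖) = δ * ‖v‖ * ‖w‖ / ‖w‖ ^ 2 by field_simp,
    div_le_div_iff_of_pos_right (by positivity)]

section LipschitzPerturbation

variable {L a b c : ℝ}

theorem sq_add_sq_div_two_le_of_abs_le_mul_abs (hc : |c| ≤ L * |a|) :
    (a ^ 2 + L ^ 2 * b ^ 2) / 2 ≤ a * a + (L ^ 2 * b + c) * b := by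
  have hcb : -(L * |a| * |b|) ≤ c * b := by
    rw [neg_le]
    calc -(c * b) ≤ |c| * |b| := by rw [← abs_mul]; exact neg_le_abs _
      _ ≤ L * |a| * |b| := by gcongr
  nlinarith [sq_nonneg (|a| - L * |b|), sq_abs a, sq_abs b]

theorem sq_add_add_sq_le (hc : |c| ≤ L * |a|) :
    a ^ 2 + (L ^ 2 * b + c) ^ 2 ≤ (1 + 2 * L ^ 2) * (a ^ 2 + L ^ 2 * b ^ 2) := by
  have hc2 : c ^ 2 ≤ L ^ 2 * a ^ 2 := by
    rw [← sq_abs c, ← sq_abs a, ← mul_pow]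
    exact pow_le_pow_left₀ (abs_nonneg c) hc 2
  nlinarith [sq_nonneg (L ^ 2 * b - c), sq_nonneg (L * b)]

theorem min_sq_mul_le_sq_add (hL : 0 ≤ L) :
    min L 1 ^ 2 * (a ^ 2 + b ^ 2) ≤ a ^ 2 + L ^ 2 * b ^ 2 := by
  have hm : 0 ≤ min L 1 := le_min hL zero_le_one
  have hm1 : min L 1 ^ 2 ≤ 1 := pow_le_one₀ hm (min_le_right L 1)
  have hmL : min L 1 ^ 2 ≤ L ^ 2 := pow_le_pow_left₀ hm (min_le_left L 1) 2
  nlinarith [sq_nonneg a, sq_nonneg b]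

theorem min_sq_mul_sq_mul_sq_le (hL : 0 ≤ L) (hc : |c| ≤ L * |a|) :
    min L 1 ^ 2 * ((a ^ 2 + (L ^ 2 * b + c) ^ 2) * (a ^ 2 + b ^ 2)) ≤
      4 * (1 + 2 * L ^ 2) * (a * a + (L ^ 2 * b + c) * b) ^ 2 := by
  set S := a ^ 2 + L ^ 2 * b ^ 2
  have hS : 0 ≤ S := by positivity
  have hR := sq_add_sq_div_two_le_of_abs_le_mul_abs (b := b) hc
  calc min L 1 ^ 2 * ((a ^ 2 + (L ^ 2 * b + c) ^ 2) * (a ^ 2 + b ^ 2))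
      = (a ^ 2 + (L ^ 2 * b + c) ^ 2) * (min L 1 ^ 2 * (a ^ 2 + b ^ 2)) := by ring
    _ ≤ ((1 + 2 * L ^ 2) * S) * S := by
        gcongr
        exacts [sq_add_add_sq_le hc, min_sq_mul_le_sq_add hL]
    _ = 4 * (1 + 2 * L ^ 2) * (S / 2) ^ 2 := by ring
    _ ≤ 4 * (1 + 2 * L ^ 2) * (a * a + (L ^ 2 * b + c) * b) ^ 2 := by gcongr

end LipschitzPerturbation

noncomputable def lipschitzGraphDelta (L : ℝ) : ℝ := min L 1 / (2 * √(1 + 2 * L ^ 2))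

theorem lipschitzGraphDelta_pos {L : ℝ} (hL : 0 < L) : 0 < lipschitzGraphDelta L := by
  unfold lipschitzGraphDelta
  positivity

theorem lipschitzGraphDelta_sq (L : ℝ) :
    lipschitzGraphDelta L ^ 2 = min L 1 ^ 2 / (4 * (1 + 2 * L ^ 2)) := by
  rw [lipschitzGraphDelta, div_pow, mul_pow, Real.sq_sqrt (by positivity)]
  norm_num

def lipschitzGraphMap (L : ℝ) (g : ℝ → ℝ) (z : ℂ) : ℂ :=
  (z.re : ℂ) + Complex.I * ((L ^ 2 * z.im + g z.re : ℝ) : ℂ)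

section lipschitzGraphMap

variable (L : ℝ) (g : ℝ → ℝ)

@[simp]
theorem lipschitzGraphMap_re (z : ℂ) : (lipschitzGraphMap L g z).re = z.re := by
  simp only [lipschitzGraphMap, Complex.add_re, Complex.ofReal_re, Complex.re_mul_ofReal,
    Complex.I_re, zero_mul, add_zero]

@[simp]
theorem lipschitzGraphMap_im (z : ℂ) :
    (lipschitzGraphMap L g z).im = L ^ 2 * z.im + g z.re := by
  simp only [lipschitzGraphMap, Complex.add_im, Complex.ofReal_im, Complex.im_mul_ofReal,
    Complex.I_im, one_mul, zero_add]

theorem lipschitzGraphMap_ofReal (x : ℝ) : lipschitzGraphMap L g x = x + Complex.I * g x := by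
  apply Complex.ext <;> simp

theorem lipschitzGraphMap_ne_of_re_ne {z ζ : ℂ} (h : z.re ≠ ζ.re) :
    lipschitzGraphMap L g z ≠ lipschitzGraphMap L g ζ :=
  fun he => h (by simpa using congrArg Complex.re he)

end lipschitzGraphMap

theorem deltaMonotone_lipschitzGraphMap {L : ℝ} (hL : 0 < L) {g : ℝ → ℝ}
    (hg : LipschitzWith (Real.toNNReal L) g) :
    DeltaMonotone (lipschitzGraphDelta L) (lipschitzGraphMap L g) := by
  intro z ζ hne
  rw [Complex.mul_div_norm_le_div_re_iff (sub_ne_zero.2 hne)]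
  set v := lipschitzGraphMap L g z - lipschitzGraphMap L g ζ
  set w := z - ζ
  have hvre : v.re = w.re := by simp [v, w]
  have hvim : v.im = L ^ 2 * w.im + (g z.re - g ζ.re) := by simp only [v, w, Complex.sub_im, lipschitzGraphMap_im]; ring
  have hc : |g z.re - g ζ.re| ≤ L * |w.re| := by
    simpa [w, Real.dist_eq, hL.le] using hg.dist_le_mul z.re ζ.re
  have hR : 0 ≤ v.re * w.re + v.im * w.im := by
    rw [hvre, hvim]
    exact le_trans (by positivity) (sq_add_sq_div_two_le_of_abs_le_mul_abs hc)
  refine (abs_le_of_sq_le_sq' ?_ hR).2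
  rw [mul_pow, mul_pow, lipschitzGraphDelta_sq, Complex.sq_norm, Complex.sq_norm,
    Complex.normSq_apply, Complex.normSq_apply, hvre, hvim, div_mul_eq_mul_div,
    div_mul_eq_mul_div, div_le_iff₀ (by positivity)]
  linarith [min_sq_mul_sq_mul_sq_le (b := w.im) hL.le hc]

/-- For every `L > 0` there is `δ > 0` (depending only on `L`) such that for every
`L`-Lipschitz function `g : ℝ → ℝ`, the map `f(z) = Re z + i L² Im z + i g(Re z)` is
delta-monotone with constant `δ`, is nonconstant, and maps `ℝ` onto the graph of `g`. -/
theorem lipschitz_graph_is_deltaMonotone_image (L : ℝ) (hL : 0 < L) :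
    ∃ δ > 0, ∀ g : ℝ → ℝ, LipschitzWith (Real.toNNReal L) g →
      (∀ z ζ : ℂ, z ≠ ζ →
        δ * (‖((z.re : ℂ) + Complex.I * ((L ^ 2 * z.im + g z.re : ℝ) : ℂ)) -
               ((ζ.re : ℂ) + Complex.I * ((L ^ 2 * ζ.im + g ζ.re : ℝ) : ℂ))‖ /
            ‖z - ζ‖) ≤
          (((((z.re : ℂ) + Complex.I * ((L ^ 2 * z.im + g z.re : ℝ) : ℂ)) -
             ((ζ.re : ℂ) + Complex.I * ((L ^ 2 * ζ.im + g ζ.re : ℝ) : ℂ))) / (z - ζ)).re)) ∧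
      (∃ z ζ : ℂ, ((z.re : ℂ) + Complex.I * ((L ^ 2 * z.im + g z.re : ℝ) : ℂ)) ≠
          ((ζ.re : ℂ) + Complex.I * ((L ^ 2 * ζ.im + g ζ.re : ℝ) : ℂ))) ∧
      Set.range (fun x : ℝ =>
          (((x : ℂ).re : ℂ) + Complex.I * ((L ^ 2 * (x : ℂ).im + g (x : ℂ).re : ℝ) : ℂ))) =
        Set.range (fun u : ℝ => (u : ℂ) + Complex.I * (g u : ℂ)) := by
  refine ⟨lipschitzGraphDelta L, lipschitzGraphDelta_pos hL, fun g hg =>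
    ⟨deltaMonotone_lipschitzGraphMap hL hg, ⟨1, 0, ?_⟩, ?_⟩⟩
  · exact lipschitzGraphMap_ne_of_re_ne L g (by norm_num)
  · exact congrArg Set.range (funext (lipschitzGraphMap_ofReal L g))
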